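/- arXiv:2404.16971 — 2 statements merged into one kernel-verified Lean document; each statement's English description precedes it below -/
import Mathlib

section
/- Let T be a locally satisfiable negative local theory and x a variable. For every bound B(x) of x in T, the set ⟨B(x)⟩ = {p ∈ S^x(T) : B(x) ⊆ p} is a compact subset of the space S^x(T) of local positive types of T on x with the local positive logic topology. -/
noncomputable section

structure LocalLanguage : Type 1 where
  Sorts : Type
  Rel : (n : ℕ) → (Fin n → Sorts) → Type
  Const : Sorts → Type
  Loc : Sorts → Type
  locToRel : {s : Sorts} → Loc s → Rel 2 ![s, s]
  dd0 : (s : Sorts) → Loc s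
  locMul : {s : Sorts} → Loc s → Loc s → Loc s
  locLe : {s : Sorts} → Loc s → Loc s → Prop
  locMul_assoc : ∀ {s} (d₁ d₂ d₃ : Loc s), locMul (locMul d₁ d₂) d₃ = locMul d₁ (locMul d₂ d₃)
  dd0_locMul : ∀ {s} (d : Loc s), locMul (dd0 s) d = d
  locMul_dd0 : ∀ {s} (d : Loc s), locMul d (dd0 s) = d
  locLe_refl : ∀ {s} (d : Loc s), locLe d d
  locLe_trans : ∀ {s} (d₁ d₂ d₃ : Loc s), locLe d₁ d₂ → locLe d₂ d₃ → locLe d₁ d₃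
  locLe_antisymm : ∀ {s} (d₁ d₂ : Loc s), locLe d₁ d₂ → locLe d₂ d₁ → d₁ = d₂
  dd0_locLe : ∀ {s} (d : Loc s), locLe (dd0 s) d
  locMul_mono : ∀ {s} (d₁ d₂ e₁ e₂ : Loc s), locLe d₁ e₁ → locLe d₂ e₂ →
    locLe (locMul d₁ d₂) (locMul e₁ e₂)
  bound : {s : Sorts} → Const s → Const s → Loc s

structure LStructure (L : LocalLanguage) : Type 1 where
  Dom : L.Sorts → Type
  relMap : {n : ℕ} → {ρ : Fin n → L.Sorts} → L.Rel n ρ → ((i : Fin n) → Dom (ρ i)) → Prop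
  constMap : {s : L.Sorts} → L.Const s → Dom s

def dpair {C : Fin 2 → Sort*} (a : C 0) (b : C 1) : (i : Fin 2) → C i
  | ⟨0, _⟩ => a
  | ⟨1, _⟩ => b

def LStructure.locRel {L : LocalLanguage} (M : LStructure L) {s : L.Sorts}
    (d : L.Loc s) (a b : M.Dom s) : Prop :=
  M.relMap (L.locToRel d) (dpair a b)

structure IsLocal {L : LocalLanguage} (M : LStructure L) : Prop where
  symm : ∀ {s : L.Sorts} (d : L.Loc s) (a b : M.Dom s), M.locRel d a b → M.locRel d b a
  mono : ∀ {s : L.Sorts} (d₁ d₂ : L.Loc s), L.locLe d₁ d₂ →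
    ∀ (a b : M.Dom s), M.locRel d₁ a b → M.locRel d₂ a b
  comp : ∀ {s : L.Sorts} (d₁ d₂ : L.Loc s) (a b c : M.Dom s),
    M.locRel d₁ a b → M.locRel d₂ b c → M.locRel (L.locMul d₁ d₂) a c
  boundAx : ∀ {s : L.Sorts} (c₁ c₂ : L.Const s),
    M.locRel (L.bound c₁ c₂) (M.constMap c₁) (M.constMap c₂)
  total : ∀ {s : L.Sorts} (a b : M.Dom s), ∃ d : L.Loc s, M.locRel d a b
  dd0_eq : ∀ {s : L.Sorts} (a b : M.Dom s), M.locRel (L.dd0 s) a b ↔ a = b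

/-! ## Syntax -/

/-- Terms: variables or constants (the language is relational). -/
inductive LTerm (L : LocalLanguage) (α : Type) (σ : α → L.Sorts) : L.Sorts → Type
  | var (a : α) : LTerm L α σ (σ a)
  | const {s : L.Sorts} (c : L.Const s) : LTerm L α σ s

/-- Sort assignment for a context extended by one variable of sort `s`. -/
abbrev osort {L : LocalLanguage} {α : Type} (s : L.Sorts) (σ : α → L.Sorts) :
    Option α → L.Sorts :=
  fun o => Option.elim o s σ

/-- Positive formulas: atomic, conjunction, disjunction, existential quantification. -/
inductive PosForm (L : LocalLanguage) : (α : Type) → (α → L.Sorts) → Type 1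
  | rel {α : Type} {σ : α → L.Sorts} {n : ℕ} {ρ : Fin n → L.Sorts}
      (R : L.Rel n ρ) (ts : (i : Fin n) → LTerm L α σ (ρ i)) : PosForm L α σ
  | and {α : Type} {σ : α → L.Sorts} (φ ψ : PosForm L α σ) : PosForm L α σ
  | or {α : Type} {σ : α → L.Sorts} (φ ψ : PosForm L α σ) : PosForm L α σ
  | ex {α : Type} {σ : α → L.Sorts} (s : L.Sorts)
      (φ : PosForm L (Option α) (osort s σ)) : PosForm L α σ

/-- Local positive formulas: atomic, conjunction, disjunction, local existential
quantification `∃ x ∈ d(t) φ`. -/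
inductive LPosForm (L : LocalLanguage) : (α : Type) → (α → L.Sorts) → Type 1
  | rel {α : Type} {σ : α → L.Sorts} {n : ℕ} {ρ : Fin n → L.Sorts}
      (R : L.Rel n ρ) (ts : (i : Fin n) → LTerm L α σ (ρ i)) : LPosForm L α σ
  | and {α : Type} {σ : α → L.Sorts} (φ ψ : LPosForm L α σ) : LPosForm L α σ
  | or {α : Type} {σ : α → L.Sorts} (φ ψ : LPosForm L α σ) : LPosForm L α σ
  | lex {α : Type} {σ : α → L.Sorts} (s : L.Sorts) (d : L.Loc s) (t : LTerm L α σ s)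
      (φ : LPosForm L (Option α) (osort s σ)) : LPosForm L α σ

/-- Local formulas: atomic, negation, conjunction, local existential quantification. -/
inductive LForm (L : LocalLanguage) : (α : Type) → (α → L.Sorts) → Type 1
  | rel {α : Type} {σ : α → L.Sorts} {n : ℕ} {ρ : Fin n → L.Sorts}
      (R : L.Rel n ρ) (ts : (i : Fin n) → LTerm L α σ (ρ i)) : LForm L α σ
  | not {α : Type} {σ : α → L.Sorts} (φ : LForm L α σ) : LForm L α σ
  | and {α : Type} {σ : α → L.Sorts} (φ ψ : LForm L α σ) : LForm L α σ
  | lex {α : Type} {σ : α → L.Sorts} (s : L.Sorts) (d : L.Loc s) (t : LTerm L α σ s)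
      (φ : LForm L (Option α) (osort s σ)) : LForm L α σ

/-! ## Semantics -/

def LTerm.realize {L : LocalLanguage} (M : LStructure L) {α : Type} {σ : α → L.Sorts}
    (v : (a : α) → M.Dom (σ a)) : {s : L.Sorts} → LTerm L α σ s → M.Dom s
  | _, .var a => v a
  | _, .const c => M.constMap c

/-- Extension of a valuation by a value for the new variable. -/
def vcons {L : LocalLanguage} {M : LStructure L} {α : Type} {σ : α → L.Sorts} {s : L.Sorts}
    (x : M.Dom s) (v : (a : α) → M.Dom (σ a)) : (o : Option α) → M.Dom (osort s σ o)
  | none => x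
  | some a => v a

def PosForm.Realize {L : LocalLanguage} (M : LStructure L) :
    {α : Type} → {σ : α → L.Sorts} → PosForm L α σ → ((a : α) → M.Dom (σ a)) → Prop
  | _, _, .rel R ts, v => M.relMap R (fun i => (ts i).realize M v)
  | _, _, .and φ ψ, v => φ.Realize M v ∧ ψ.Realize M v
  | _, _, .or φ ψ, v => φ.Realize M v ∨ ψ.Realize M v
  | _, _, .ex s φ, v => ∃ x : M.Dom s, φ.Realize M (vcons x v)

def LPosForm.Realize {L : LocalLanguage} (M : LStructure L) :
    {α : Type} → {σ : α → L.Sorts} → LPosForm L α σ → ((a : α) → M.Dom (σ a)) → Prop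
  | _, _, .rel R ts, v => M.relMap R (fun i => (ts i).realize M v)
  | _, _, .and φ ψ, v => φ.Realize M v ∧ ψ.Realize M v
  | _, _, .or φ ψ, v => φ.Realize M v ∨ ψ.Realize M v
  | _, _, .lex s d t φ, v =>
      ∃ x : M.Dom s, M.locRel d x (t.realize M v) ∧ φ.Realize M (vcons x v)

def LForm.Realize {L : LocalLanguage} (M : LStructure L) :
    {α : Type} → {σ : α → L.Sorts} → LForm L α σ → ((a : α) → M.Dom (σ a)) → Prop
  | _, _, .rel R ts, v => M.relMap R (fun i => (ts i).realize M v)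
  | _, _, .not φ, v => ¬ φ.Realize M v
  | _, _, .and φ ψ, v => φ.Realize M v ∧ ψ.Realize M v
  | _, _, .lex s d t φ, v =>
      ∃ x : M.Dom s, M.locRel d x (t.realize M v) ∧ φ.Realize M (vcons x v)

/-- Quantifier-free positive formulas. -/
inductive PosForm.IsQF {L : LocalLanguage} : {α : Type} → {σ : α → L.Sorts} → PosForm L α σ → Prop
  | rel {α : Type} {σ : α → L.Sorts} {n : ℕ} {ρ : Fin n → L.Sorts}
      (R : L.Rel n ρ) (ts : (i : Fin n) → LTerm L α σ (ρ i)) : PosForm.IsQF (.rel R ts)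
  | and {α : Type} {σ : α → L.Sorts} {φ ψ : PosForm L α σ} :
      PosForm.IsQF φ → PosForm.IsQF ψ → PosForm.IsQF (.and φ ψ)
  | or {α : Type} {σ : α → L.Sorts} {φ ψ : PosForm L α σ} :
      PosForm.IsQF φ → PosForm.IsQF ψ → PosForm.IsQF (.or φ ψ)


/-! ## Sentences, theories, models -/

/-- Sort assignment for the empty context. -/
abbrev emptySorts (L : LocalLanguage) : Empty → L.Sorts := fun e => e.elim

/-- Positive sentences. -/
abbrev PosSentence (L : LocalLanguage) := PosForm L Empty (emptySorts L)

/-- A positive sentence holds in a structure. -/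
def PosSentence.RealizedIn {L : LocalLanguage} (φ : PosSentence L) (M : LStructure L) : Prop :=
  φ.Realize M (fun e => e.elim)

/-- We represent a negative theory by the set of positive sentences whose negations
belong to it.  `M` is a local model of `T` if `M` is local and satisfies the negation of
every positive sentence in `T`. -/
def LocalModel {L : LocalLanguage} (M : LStructure L) (T : Set (PosSentence L)) : Prop :=
  IsLocal M ∧ ∀ φ ∈ T, ¬ φ.RealizedIn M

/-- `T` (a set of positive sentences standing for the negative theory `{¬φ : φ ∈ T}`)
is a negative local theory if it is closed under local implication: any negative sentence
true in every local model of `T` is already in `T`. -/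
def IsNegLocalTheory {L : LocalLanguage} (T : Set (PosSentence L)) : Prop :=
  ∀ φ : PosSentence L, (∀ M : LStructure L, LocalModel M T → ¬ φ.RealizedIn M) → φ ∈ T

/-- `T` is locally satisfiable: it has a local model. -/
def LocSat {L : LocalLanguage} (T : Set (PosSentence L)) : Prop :=
  ∃ M : LStructure L, LocalModel M T

/-- The negative theory of a structure (as the set of positive sentences failing in it). -/
def ThNeg {L : LocalLanguage} (M : LStructure L) : Set (PosSentence L) :=
  {φ | ¬ φ.RealizedIn M}

/-! ## Homomorphisms -/

structure LHom {L : LocalLanguage} (M N : LStructure L) where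
  toFun : (s : L.Sorts) → M.Dom s → N.Dom s
  map_rel : ∀ {n : ℕ} {ρ : Fin n → L.Sorts} (R : L.Rel n ρ) (x : (i : Fin n) → M.Dom (ρ i)),
    M.relMap R x → N.relMap R (fun i => toFun (ρ i) (x i))
  map_const : ∀ {s : L.Sorts} (c : L.Const s), toFun s (M.constMap c) = N.constMap c

def LHom.comp {L : LocalLanguage} {M N P : LStructure L} (g : LHom N P) (f : LHom M N) :
    LHom M P where
  toFun s := g.toFun s ∘ f.toFun s
  map_rel R x h := g.map_rel R _ (f.map_rel R x h)
  map_const c := by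
    simp only [Function.comp_apply, f.map_const, g.map_const]

def LHom.id {L : LocalLanguage} (M : LStructure L) : LHom M M where
  toFun _ := fun x => x
  map_rel _ _ h := h
  map_const _ := rfl

/-- A homomorphism is a positive embedding if it reflects all positive formulas. -/
def LHom.IsPosEmbedding {L : LocalLanguage} {M N : LStructure L} (h : LHom M N) : Prop :=
  ∀ (α : Type) (σ : α → L.Sorts) (φ : PosForm L α σ) (v : (a : α) → M.Dom (σ a)),
    φ.Realize N (fun a => h.toFun (σ a) (v a)) → φ.Realize M v

/-- A local positively closed model of `T`. -/
def IsPC {L : LocalLanguage} (M : LStructure L) (T : Set (PosSentence L)) : Prop :=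
  LocalModel M T ∧
    ∀ (N : LStructure L) (h : LHom M N), LocalModel N T → h.IsPosEmbedding

/-- An endomorphism is an automorphism if it has a two-sided inverse homomorphism. -/
def LHom.IsAuto {L : LocalLanguage} {M : LStructure L} (f : LHom M M) : Prop :=
  ∃ g : LHom M M, g.comp f = LHom.id M ∧ f.comp g = LHom.id M

/-- Isomorphism of structures. -/
def Isomorphic {L : LocalLanguage} (M N : LStructure L) : Prop :=
  ∃ (f : LHom M N) (g : LHom N M), g.comp f = LHom.id M ∧ f.comp g = LHom.id N

/-! ## Types -/

/-- The local positive type of a tuple. -/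
def ltp {L : LocalLanguage} (M : LStructure L) {α : Type} {σ : α → L.Sorts}
    (v : (a : α) → M.Dom (σ a)) : Set (LPosForm L α σ) :=
  {φ | φ.Realize M v}

/-- The positive type of a tuple. -/
def ptp {L : LocalLanguage} (M : LStructure L) {α : Type} {σ : α → L.Sorts}
    (v : (a : α) → M.Dom (σ a)) : Set (PosForm L α σ) :=
  {φ | φ.Realize M v}

/-- A partial local positive type of `T` on `(α, σ)`: a set of local positive formulas
realized by some tuple in some local model of `T`. -/
def IsPartialLType {L : LocalLanguage} (T : Set (PosSentence L)) {α : Type}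
    {σ : α → L.Sorts} (Γ : Set (LPosForm L α σ)) : Prop :=
  ∃ (M : LStructure L) (v : (a : α) → M.Dom (σ a)),
    LocalModel M T ∧ ∀ φ ∈ Γ, LPosForm.Realize M φ v

/-- A local positive type: a maximal partial local positive type. -/
def IsLType {L : LocalLanguage} (T : Set (PosSentence L)) {α : Type}
    {σ : α → L.Sorts} (Γ : Set (LPosForm L α σ)) : Prop :=
  IsPartialLType T Γ ∧ ∀ Γ' : Set (LPosForm L α σ), IsPartialLType T Γ' → Γ ⊆ Γ' → Γ' = Γ

/-- A variable `(α, σ)` is pointed if every sort not occurring among its sorts carries a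
constant symbol. -/
def VPointed {L : LocalLanguage} {α : Type} (σ : α → L.Sorts) : Prop :=
  ∀ s : L.Sorts, s ∉ Set.range σ → Nonempty (L.Const s)


/-! ## Bounds and bounded satisfiability -/

/-- Pair of terms as arguments for a binary relation symbol. -/
def tpair {L : LocalLanguage} {α : Type} {σ : α → L.Sorts} {s t : L.Sorts}
    (t₁ : LTerm L α σ s) (t₂ : LTerm L α σ t) : (i : Fin 2) → LTerm L α σ (![s, t] i) :=
  dpair t₁ t₂

/-- A bound of the variable `(α, σ)`: a choice, for every single variable whose sort
carries a constant symbol, of a locality relation and a constant, and for every pair of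
single variables of the same sort, of a locality relation. -/
structure VBound (L : LocalLanguage) (α : Type) (σ : α → L.Sorts) where
  dConst : (a : α) → Nonempty (L.Const (σ a)) → L.Loc (σ a)
  cConst : (a : α) → Nonempty (L.Const (σ a)) → L.Const (σ a)
  dPair : (a b : α) → σ a = σ b → L.Loc (σ a)

/-- The set of (atomic, quantifier-free) local positive formulas making up a bound:
`d_a(x_a, c_a)` and `d_{a,b}(x_a, x_b)`. -/
def VBound.toSet {L : LocalLanguage} {α : Type} {σ : α → L.Sorts} (B : VBound L α σ) :
    Set (LPosForm L α σ) :=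
  {φ | (∃ (a : α) (h : Nonempty (L.Const (σ a))),
          φ = LPosForm.rel (L.locToRel (B.dConst a h))
                (tpair (LTerm.var a) (LTerm.const (B.cConst a h)))) ∨
       (∃ (a b : α) (e : σ a = σ b),
          φ = LPosForm.rel (L.locToRel (B.dPair a b e))
                (tpair (LTerm.var a) (e.symm ▸ LTerm.var b)))}

/-- A bound holds of a tuple if all its formulas do. -/
def VBound.Holds {L : LocalLanguage} {α : Type} {σ : α → L.Sorts} (B : VBound L α σ)
    (M : LStructure L) (v : (a : α) → M.Dom (σ a)) : Prop :=
  ∀ ψ ∈ B.toSet, LPosForm.Realize M ψ v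

/-- Finite local satisfiability of a set of local positive formulas in `T`. -/
def FinLocSat {L : LocalLanguage} (T : Set (PosSentence L)) {α : Type} {σ : α → L.Sorts}
    (Δ : Set (LPosForm L α σ)) : Prop :=
  ∀ Δ₀ ⊆ Δ, Δ₀.Finite →
    ∃ (M : LStructure L) (v : (a : α) → M.Dom (σ a)),
      LocalModel M T ∧ ∀ φ ∈ Δ₀, LPosForm.Realize M φ v

/-- Bounded satisfiability: for some bound `B`, `Γ ∪ B` is finitely locally satisfiable. -/
def BoundedlySat {L : LocalLanguage} (T : Set (PosSentence L)) {α : Type}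
    {σ : α → L.Sorts} (Γ : Set (LPosForm L α σ)) : Prop :=
  ∃ B : VBound L α σ, FinLocSat T (Γ ∪ B.toSet)

/-! ## Π₁-local formulas -/

/-- Dependent `Sum.elim` of valuations. -/
def sval {L : LocalLanguage} {M : LStructure L} {α β : Type} {σ : α → L.Sorts}
    {τ : β → L.Sorts} (v : (a : α) → M.Dom (σ a)) (w : (b : β) → M.Dom (τ b)) :
    (x : α ⊕ β) → M.Dom (Sum.elim σ τ x)
  | .inl a => v a
  | .inr b => w b

/-- A Π₁-local formula: a universally quantified local formula. -/
structure Pi1LForm (L : LocalLanguage) (α : Type) (σ : α → L.Sorts) : Type 1 where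
  n : ℕ
  τ : Fin n → L.Sorts
  matrix : LForm L (α ⊕ Fin n) (Sum.elim σ τ)

def Pi1LForm.Realize {L : LocalLanguage} {α : Type} {σ : α → L.Sorts}
    (φ : Pi1LForm L α σ) (M : LStructure L) (v : (a : α) → M.Dom (σ a)) : Prop :=
  ∀ w : (i : Fin φ.n) → M.Dom (φ.τ i), φ.matrix.Realize M (sval v w)

/-- Bounded satisfiability of a set of Π₁-local formulas: for some bound `B`, every
finite subset of `Γ` together with every finite part of `B` is realized in a local
model of `T`. -/
def Pi1BoundedlySat {L : LocalLanguage} (T : Set (PosSentence L)) {α : Type}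
    {σ : α → L.Sorts} (Γ : Set (Pi1LForm L α σ)) : Prop :=
  ∃ B : VBound L α σ,
    ∀ Γ₀ ⊆ Γ, Γ₀.Finite → ∀ F ⊆ B.toSet, F.Finite →
      ∃ (M : LStructure L) (v : (a : α) → M.Dom (σ a)),
        LocalModel M T ∧ (∀ φ ∈ Γ₀, Pi1LForm.Realize φ M v) ∧
          (∀ ψ ∈ F, LPosForm.Realize M ψ v)

/-! ## Cardinality, homogeneity, retractors -/

/-- The cardinality of a structure: that of the disjoint union of its sorts. -/
def LStructure.card {L : LocalLanguage} (M : LStructure L) : Cardinal :=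
  Cardinal.mk (Σ s : L.Sorts, M.Dom s)

/-- The cardinality of a local language. -/
def LocalLanguage.card (L : LocalLanguage) : Cardinal :=
  max Cardinal.aleph0
    (Cardinal.mk (L.Sorts ⊕ (Σ s : L.Sorts, L.Const s) ⊕ (Σ s : L.Sorts, L.Loc s) ⊕
      (Σ (n : ℕ) (ρ : Fin n → L.Sorts), L.Rel n ρ)))

/-- `M` is a (local positively) κ-ultrahomogeneous model of `T`. -/
def IsUltrahomogeneous {L : LocalLanguage} (T : Set (PosSentence L)) (M : LStructure L)
    (κ : Cardinal) : Prop :=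
  ∀ A B : LStructure L, LocalModel A T → LocalModel B T → A.card < κ → B.card < κ →
    ∀ f : LHom A M, f.IsPosEmbedding → ∀ g : LHom A B, ∃ h : LHom B M, h.comp g = f

/-- A retractor of `T`: a local model of `T` such that every homomorphism into a local
model of `T` has a retraction. -/
def IsRetractor {L : LocalLanguage} (T : Set (PosSentence L)) (C : LStructure L) : Prop :=
  LocalModel C T ∧
    ∀ N : LStructure L, LocalModel N T →
      ∀ f : LHom C N, ∃ g : LHom N C, g.comp f = LHom.id C

/-- `M` is κ-universal for a class `K` of structures. -/
def IsUniversal {L : LocalLanguage} (M : LStructure L) (K : LStructure L → Prop)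
    (κ : Cardinal) : Prop :=
  ∀ N : LStructure L, K N → N.card < κ → Nonempty (LHom N M)

/-- `M` is absolutely universal for a class `K` of structures. -/
def IsAbsUniversal {L : LocalLanguage} (M : LStructure L) (K : LStructure L → Prop) : Prop :=
  ∀ N : LStructure L, K N → Nonempty (LHom N M)

/-- Compatibility of two local models of `T`. -/
def Compat {L : LocalLanguage} (T : Set (PosSentence L)) (A B : LStructure L) : Prop :=
  ∃ M : LStructure L, LocalModel M T ∧ Nonempty (LHom A M) ∧ Nonempty (LHom B M)

/-- The local joint (homomorphism) property. -/
def HasLJP {L : LocalLanguage} (T : Set (PosSentence L)) : Prop :=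
  ∀ A B : LStructure L, LocalModel A T → LocalModel B T →
    ∃ M : LStructure L, LocalModel M T ∧ Nonempty (LHom A M) ∧ Nonempty (LHom B M)


/-! ## Parameters -/

/-- A set of parameters in a structure. -/
def ParamSet {L : LocalLanguage} (M : LStructure L) := (s : L.Sorts) → Set (M.Dom s)

/-- Interpretation in `M` of old and new constants of the expanded language. -/
def paramInterp {L : LocalLanguage} (M : LStructure L) (A : ParamSet M) {s : L.Sorts} :
    L.Const s ⊕ (A s) → M.Dom s
  | .inl c => M.constMap c
  | .inr a => a.1

/-- The expansion `L(A)` of `L` by new constants for the parameters `A` of a local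
structure `M`; bounds for pairs involving the new constants are chosen (by locality
axiom (A5)) so that they hold in `M`. -/
noncomputable def LocalLanguage.withParams (L : LocalLanguage) (M : LStructure L)
    (hM : IsLocal M) (A : ParamSet M) : LocalLanguage where
  Sorts := L.Sorts
  Rel := L.Rel
  Const s := L.Const s ⊕ (A s)
  Loc := L.Loc
  locToRel := L.locToRel
  dd0 := L.dd0
  locMul := L.locMul
  locLe := L.locLe
  locMul_assoc := L.locMul_assoc
  dd0_locMul := L.dd0_locMul
  locMul_dd0 := L.locMul_dd0
  locLe_refl := L.locLe_refl
  locLe_trans := L.locLe_trans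
  locLe_antisymm := L.locLe_antisymm
  dd0_locLe := L.dd0_locLe
  locMul_mono := L.locMul_mono
  bound := fun {_s} c₁ c₂ =>
    match c₁, c₂ with
    | .inl c₁, .inl c₂ => L.bound c₁ c₂
    | c₁, c₂ => Classical.choose (hM.total (paramInterp M A c₁) (paramInterp M A c₂))

/-- The natural expansion `M_A` of `M` to an `L(A)`-structure. -/
noncomputable def LStructure.withParams {L : LocalLanguage} (M : LStructure L)
    (hM : IsLocal M) (A : ParamSet M) : LStructure (L.withParams M hM A) where
  Dom := M.Dom
  relMap := M.relMap
  constMap := paramInterp M A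

/-- `M` has the local joint property over `A`: any two local models of `Th₋(M/A)` map
into a common local model of `Th₋(M/A)`. -/
def HasLJPOver {L : LocalLanguage} (M : LStructure L) (hM : IsLocal M) (A : ParamSet M) :
    Prop :=
  HasLJP (ThNeg (M.withParams hM A))

/-- `M` is (local positively) κ-saturated: it realizes every local positive type of
`Th₋(M/A)` on `x` whenever `|x| < κ`, `|A| < κ` and `M` has the local joint property
over `A`. -/
def IsSaturatedAt {L : LocalLanguage} (M : LStructure L) (hM : IsLocal M)
    (κ : Cardinal) : Prop :=
  ∀ A : ParamSet M, Cardinal.mk (Σ s : L.Sorts, A s) < κ → HasLJPOver M hM A →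
    ∀ (α : Type) (σ : α → L.Sorts), Cardinal.mk α < κ →
      ∀ Γ : Set (LPosForm (L.withParams M hM A) α σ),
        IsLType (ThNeg (M.withParams hM A)) Γ →
          ∃ v : (a : α) → M.Dom (σ a), ∀ φ ∈ Γ, LPosForm.Realize (M.withParams hM A) φ v

/-- The local positive type of a tuple over a set of parameters `A`, rendered as the set
of local positive formulas with extra free variables for the parameters of `A` that are
satisfied when those variables are evaluated at the parameters themselves. -/
def ltpOver {L : LocalLanguage} (M : LStructure L) (A : ParamSet M) {α : Type}
    {σ : α → L.Sorts} (v : (a : α) → M.Dom (σ a)) :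
    Set (LPosForm L (α ⊕ Σ s : L.Sorts, A s) (Sum.elim σ (fun p => p.1))) :=
  {φ | φ.Realize M (sval v (fun p => p.2.1))}

/-! ## Substructures -/

/-- A substructure of `M`: a family of subsets closed under the constants (the language
is relational). -/
structure Substruct {L : LocalLanguage} (M : LStructure L) where
  carrier : (s : L.Sorts) → Set (M.Dom s)
  const_mem : ∀ {s : L.Sorts} (c : L.Const s), M.constMap c ∈ carrier s

/-- The induced structure on a substructure. -/
def Substruct.toStruct {L : LocalLanguage} {M : LStructure L} (A : Substruct M) :
    LStructure L where
  Dom s := A.carrier s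
  relMap R x := M.relMap R (fun i => (x i).1)
  constMap c := ⟨M.constMap c, A.const_mem c⟩


/-! ## Topologies -/

/-- The `d`-ball at `a`. -/
def LStructure.ball {L : LocalLanguage} (M : LStructure L) {s : L.Sorts} (d : L.Loc s)
    (a : M.Dom s) : Set (M.Dom s) :=
  {b | M.locRel d a b}

/-- The local positive logic topology on a single sort of `M`: closed sets are the
subsets defined by sets of local positive formulas with parameters in `M` (parameters
being rendered as extra free variables evaluated at themselves). -/
def lpTopologyS {L : LocalLanguage} (M : LStructure L) (s : L.Sorts) :
    TopologicalSpace (M.Dom s) :=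
  TopologicalSpace.generateFrom
    {U | ∃ φ : LPosForm L (Unit ⊕ Σ s' : L.Sorts, M.Dom s')
            (Sum.elim (fun _ => s) (fun p => p.1)),
      U = {x | ¬ LPosForm.Realize M φ (sval (fun _ => x) (fun p => p.2))}}

/-- The space of local positive types of `T` on the variable `(α, σ)`. -/
def LTypeSpace (L : LocalLanguage) (T : Set (PosSentence L)) (α : Type)
    (σ : α → L.Sorts) :=
  {Γ : Set (LPosForm L α σ) // IsLType T Γ}

/-- The local positive logic topology on the space of local positive types: generated by
declaring `⟨φ⟩ = {p : φ ∈ p}` closed for every local positive formula `φ`; its closed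
sets are then exactly the sets `⟨Γ⟩` together with `∅`. -/
instance {L : LocalLanguage} (T : Set (PosSentence L)) (α : Type) (σ : α → L.Sorts) :
    TopologicalSpace (LTypeSpace L T α σ) :=
  TopologicalSpace.generateFrom
    {U | ∃ φ : LPosForm L α σ, U = {p : LTypeSpace L T α σ | φ ∉ p.1}}

/-! ## Completeness and compactness -/

/-- `T` is complete: `T = Th₋(M)` for every local positively closed model `M` of `T`. -/
def IsCompleteTheory {L : LocalLanguage} (T : Set (PosSentence L)) : Prop :=
  ∀ M : LStructure L, IsPC M T → ThNeg M = T

/-- `T` is local positively compact. -/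
def IsLocPosCompact {L : LocalLanguage} (T : Set (PosSentence L)) : Prop :=
  ∀ (s : L.Sorts) (γ : Type), Finite γ →
    ∀ (τ : γ → L.Sorts) (φ : LPosForm L (Fin 2 ⊕ γ) (Sum.elim (fun _ => s) τ)),
      (∀ M : LStructure L, LocalModel M T →
        ∀ (a : M.Dom s) (w : (j : γ) → M.Dom (τ j)),
          ¬ LPosForm.Realize M φ (sval ![a, a] w)) →
      ∀ (B : VBound L (Unit ⊕ γ) (Sum.elim (fun _ => s) τ)) (d : L.Loc s),
        ∃ k : ℕ, 0 < k ∧ ∀ M : LStructure L, LocalModel M T →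
          ¬ ∃ (a : Fin k → M.Dom s) (w : (j : γ) → M.Dom (τ j)),
            ∀ i j : Fin k, i ≠ j →
              B.Holds M (sval (fun _ => a i) w) ∧ M.locRel d (a i) (a j) ∧
                LPosForm.Realize M φ (sval ![a i, a j] w)

/-! ## Auxiliary development for Statement 5 -/

section Statement5Aux

variable {L : LocalLanguage}

theorem fin2_cases {P : Fin 2 → Prop} (h0 : P ⟨0, by omega⟩) (h1 : P ⟨1, by omega⟩) :
    ∀ i, P i := by
  rintro ⟨(_ | (_ | n)), h⟩
  · exact h0
  · exact h1
  · omega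


theorem dpair_cases {C : Fin 2 → Sort*} {a : C 0} {b : C 1} {P : ∀ i, C i → Prop}
    (h0 : P 0 a) (h1 : P 1 b) : ∀ i, P i (dpair a b i) := by
  rintro ⟨(_ | (_ | n)), h⟩
  · exact h0
  · exact h1
  · omega

/-- The locality axioms except totality. -/
structure PreLocal (M : LStructure L) : Prop where
  symm : ∀ {s : L.Sorts} (d : L.Loc s) (a b : M.Dom s), M.locRel d a b → M.locRel d b a
  mono : ∀ {s : L.Sorts} (d₁ d₂ : L.Loc s), L.locLe d₁ d₂ →
    ∀ (a b : M.Dom s), M.locRel d₁ a b → M.locRel d₂ a b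
  comp : ∀ {s : L.Sorts} (d₁ d₂ : L.Loc s) (a b c : M.Dom s),
    M.locRel d₁ a b → M.locRel d₂ b c → M.locRel (L.locMul d₁ d₂) a c
  boundAx : ∀ {s : L.Sorts} (c₁ c₂ : L.Const s),
    M.locRel (L.bound c₁ c₂) (M.constMap c₁) (M.constMap c₂)
  dd0_eq : ∀ {s : L.Sorts} (a b : M.Dom s), M.locRel (L.dd0 s) a b ↔ a = b

theorem IsLocal.preLocal {M : LStructure L} (h : IsLocal M) : PreLocal M :=
  ⟨h.symm, h.mono, h.comp, h.boundAx, h.dd0_eq⟩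

/-! ### Ultraproducts of `L`-structures -/

section Ultraproduct

variable {ι : Type} (U : Ultrafilter ι) (M : ι → LStructure L)

/-- Almost-everywhere equality. -/
def uSetoid (s : L.Sorts) : Setoid (∀ j, (M j).Dom s) where
  r f g := {j | f j = g j} ∈ U
  iseqv := by
    refine ⟨fun f => ?_, fun {f g} h => ?_, fun {f g k} h₁ h₂ => ?_⟩
    · exact Filter.univ_mem' fun j => rfl
    · exact Filter.mem_of_superset h fun j hj => hj.symm
    · exact Filter.mem_of_superset (Filter.inter_mem h₁ h₂) fun j hj => hj.1.trans hj.2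

/-- The ultraproduct structure. -/
def UProd : LStructure L where
  Dom s := Quotient (uSetoid U M s)
  relMap := fun {n ρ} R x => {j | (M j).relMap R fun i => (x i).out j} ∈ U
  constMap := fun {s} c => Quotient.mk (uSetoid U M s) fun j => (M j).constMap c

theorem UProd.relMap_iff {n : ℕ} {ρ : Fin n → L.Sorts} (R : L.Rel n ρ)
    (x : ∀ i, (UProd U M).Dom (ρ i)) (f : ∀ i, ∀ j, (M j).Dom (ρ i))
    (hf : ∀ i, Quotient.mk (uSetoid U M (ρ i)) (f i) = x i) :
    (UProd U M).relMap R x ↔ {j | (M j).relMap R fun i => f i j} ∈ U := by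
  have key : (⋂ i, {j | f i j = (x i).out j}) ∈ U := by
    refine Filter.iInter_mem.2 fun i => ?_
    have h1 : Quotient.mk (uSetoid U M (ρ i)) (f i) = Quotient.mk _ ((x i).out) := by
      exact (hf i).trans (Quotient.out_eq (x i)).symm
    exact Quotient.exact h1
  constructor
  · intro h
    refine Filter.mem_of_superset (Filter.inter_mem h key) ?_
    rintro j ⟨h₁, h₂⟩
    have e : (fun i => f i j) = fun i => (x i).out j :=
      funext fun i => Set.mem_iInter.1 h₂ i
    show (M j).relMap R fun i => f i j
    rw [e]; exact h₁
  · intro h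
    refine Filter.mem_of_superset (Filter.inter_mem h key) ?_
    rintro j ⟨h₁, h₂⟩
    have e : (fun i => f i j) = fun i => (x i).out j :=
      funext fun i => Set.mem_iInter.1 h₂ i
    show (M j).relMap R fun i => (x i).out j
    rw [← e]; exact h₁

theorem UProd.locRel_iff {s : L.Sorts} (d : L.Loc s) (x y : (UProd U M).Dom s)
    (f g : ∀ j, (M j).Dom s) (hf : Quotient.mk (uSetoid U M s) f = x)
    (hg : Quotient.mk (uSetoid U M s) g = y) :
    (UProd U M).locRel d x y ↔ {j | (M j).locRel d (f j) (g j)} ∈ U := by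
  have hfg : ∀ i, Quotient.mk (uSetoid U M (![s, s] i))
      (dpair (C := fun i => ∀ j, (M j).Dom (![s, s] i)) f g i)
      = dpair (C := fun i => (UProd U M).Dom (![s, s] i)) x y i := by
    rintro ⟨(_ | (_ | n)), h⟩
    · exact hf
    · exact hg
    · omega
  have h := UProd.relMap_iff U M (L.locToRel d) (dpair x y) (dpair f g) hfg
  have hset : {j | (M j).relMap (L.locToRel d)
        fun i => dpair (C := fun i => ∀ j, (M j).Dom (![s, s] i)) f g i j}
      = {j | (M j).locRel d (f j) (g j)} := by
    ext j
    have efun : (fun i => dpair (C := fun i => ∀ j, (M j).Dom (![s, s] i)) f g i j)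
        = dpair (C := fun i => (M j).Dom (![s, s] i)) (f j) (g j) := by
      funext i
      rcases i with ⟨(_ | (_ | n)), h⟩
      · rfl
      · rfl
      · omega
    show (M j).relMap (L.locToRel d)
        (fun i => dpair (C := fun i => ∀ j, (M j).Dom (![s, s] i)) f g i j) ↔ _
    rw [efun]
    exact Iff.rfl
  rw [← hset]
  exact h

theorem UProd.term_realize {α : Type} {σ : α → L.Sorts} {s : L.Sorts}
    (t : LTerm L α σ s) (v : ∀ a, (UProd U M).Dom (σ a)) (v' : ∀ a, ∀ j, (M j).Dom (σ a))
    (hv : ∀ a, Quotient.mk (uSetoid U M (σ a)) (v' a) = v a) :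
    t.realize (UProd U M) v
      = Quotient.mk (uSetoid U M s) (fun j => t.realize (M j) fun a => v' a j) := by
  cases t with
  | var a => exact (hv a).symm
  | const c => rfl

/-- Łoś, hard direction, for positive formulas. -/
theorem UProd.los_pos : ∀ {α : Type} {σ : α → L.Sorts} (φ : PosForm L α σ)
    (v : ∀ a, (UProd U M).Dom (σ a)) (v' : ∀ a, ∀ j, (M j).Dom (σ a)),
    (∀ a, Quotient.mk (uSetoid U M (σ a)) (v' a) = v a) →
    φ.Realize (UProd U M) v → {j | φ.Realize (M j) fun a => v' a j} ∈ U := by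
  intro α σ φ
  induction φ with
  | rel R ts =>
    intro v v' hv h
    exact (UProd.relMap_iff U M R _ (fun i j => (ts i).realize (M j) fun a => v' a j)
      (fun i => (UProd.term_realize U M (ts i) v v' hv).symm)).1 h
  | and φ ψ ihφ ihψ =>
    intro v v' hv h
    exact Filter.mem_of_superset (Filter.inter_mem (ihφ v v' hv h.1) (ihψ v v' hv h.2))
      fun j hj => ⟨hj.1, hj.2⟩
  | or φ ψ ihφ ihψ =>
    intro v v' hv h
    rcases h with h | h
    · exact Filter.mem_of_superset (ihφ v v' hv h) fun j hj => Or.inl hj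
    · exact Filter.mem_of_superset (ihψ v v' hv h) fun j hj => Or.inr hj
  | @ex α σ s φ ih =>
    intro v v' hv h
    obtain ⟨x, hx⟩ := h
    refine Filter.mem_of_superset
      (ih (vcons x v) (fun o => match o with | none => x.out | some a => v' a) ?_ hx) ?_
    · intro o
      cases o with
      | none => exact Quotient.out_eq x
      | some a => exact hv a
    · intro j hj
      refine ⟨x.out j, ?_⟩
      have e : (fun o => (match o with
            | none => x.out
            | some a => v' a : ∀ j, (M j).Dom (osort s σ o)) j)
          = vcons (x.out j) fun a => v' a j := funext fun o => by cases o <;> rfl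
      rw [← e]
      exact hj

/-- Łoś, easy direction, for local positive formulas. -/
theorem UProd.los_lpos : ∀ {α : Type} {σ : α → L.Sorts} (φ : LPosForm L α σ)
    (v : ∀ a, (UProd U M).Dom (σ a)) (v' : ∀ a, ∀ j, (M j).Dom (σ a)),
    (∀ a, Quotient.mk (uSetoid U M (σ a)) (v' a) = v a) →
    {j | φ.Realize (M j) fun a => v' a j} ∈ U → φ.Realize (UProd U M) v := by
  intro α σ φ
  induction φ with
  | rel R ts =>
    intro v v' hv h
    exact (UProd.relMap_iff U M R _ (fun i j => (ts i).realize (M j) fun a => v' a j)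
      (fun i => (UProd.term_realize U M (ts i) v v' hv).symm)).2 h
  | and φ ψ ihφ ihψ =>
    intro v v' hv h
    exact ⟨ihφ v v' hv (Filter.mem_of_superset h fun j hj => hj.1),
      ihψ v v' hv (Filter.mem_of_superset h fun j hj => hj.2)⟩
  | or φ ψ ihφ ihψ =>
    intro v v' hv h
    have hU : {j | φ.Realize (M j) fun a => v' a j} ∪ {j | ψ.Realize (M j) fun a => v' a j}
        ∈ U := Filter.mem_of_superset h fun j hj => hj
    rcases Ultrafilter.union_mem_iff.1 hU with h' | h'
    · exact Or.inl (ihφ v v' hv h')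
    · exact Or.inr (ihψ v v' hv h')
  | @lex α σ s d t φ ih =>
    intro v v' hv h
    classical
    have hterm := UProd.term_realize U M t v v' hv
    set g : ∀ j, (M j).Dom s := (t.realize (UProd U M) v).out with hgdef
    set f : ∀ j, (M j).Dom s := fun j =>
      if hj : ∃ y, (M j).locRel d y (t.realize (M j) fun a => v' a j) ∧
          φ.Realize (M j) (vcons y fun a => v' a j) then hj.choose else g j with hfdef
    refine ⟨Quotient.mk (uSetoid U M s) f, ?_, ?_⟩
    · refine (UProd.locRel_iff U M d _ _ f (fun j => t.realize (M j) fun a => v' a j) rfl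
        hterm.symm).2 ?_
      refine Filter.mem_of_superset h fun j hj => ?_
      show (M j).locRel d (f j) _
      have hfj : f j = hj.choose := dif_pos hj
      rw [hfj]
      exact hj.choose_spec.1
    · refine ih (vcons (Quotient.mk (uSetoid U M s) f) v)
        (fun o => match o with | none => f | some a => v' a) ?_ ?_
      · intro o
        cases o with
        | none => rfl
        | some a => exact hv a
      · refine Filter.mem_of_superset h fun j hj => ?_
        have e : (fun o => (match o with
              | none => f
              | some a => v' a : ∀ j, (M j).Dom (osort s σ o)) j)
            = vcons (f j) fun a => v' a j := funext fun o => by cases o <;> rfl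
        show φ.Realize (M j) _
        rw [e]
        have hfj : f j = hj.choose := dif_pos hj
        rw [hfj]
        exact hj.choose_spec.2

theorem UProd.preLocal (hM : ∀ j, IsLocal (M j)) : PreLocal (UProd U M) := by
  constructor
  · intro s d a b h
    rw [UProd.locRel_iff U M d a b a.out b.out (Quotient.out_eq a) (Quotient.out_eq b)] at h
    rw [UProd.locRel_iff U M d b a b.out a.out (Quotient.out_eq b) (Quotient.out_eq a)]
    exact Filter.mem_of_superset h fun j hj => (hM j).symm d _ _ hj
  · intro s d₁ d₂ hle a b h
    rw [UProd.locRel_iff U M d₁ a b a.out b.out (Quotient.out_eq a) (Quotient.out_eq b)] at h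
    rw [UProd.locRel_iff U M d₂ a b a.out b.out (Quotient.out_eq a) (Quotient.out_eq b)]
    exact Filter.mem_of_superset h fun j hj => (hM j).mono d₁ d₂ hle _ _ hj
  · intro s d₁ d₂ a b c h₁ h₂
    rw [UProd.locRel_iff U M d₁ a b a.out b.out (Quotient.out_eq a) (Quotient.out_eq b)] at h₁
    rw [UProd.locRel_iff U M d₂ b c b.out c.out (Quotient.out_eq b) (Quotient.out_eq c)] at h₂
    rw [UProd.locRel_iff U M _ a c a.out c.out (Quotient.out_eq a) (Quotient.out_eq c)]
    exact Filter.mem_of_superset (Filter.inter_mem h₁ h₂)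
      fun j hj => (hM j).comp d₁ d₂ _ _ _ hj.1 hj.2
  · intro s c₁ c₂
    exact (UProd.locRel_iff U M _ ((UProd U M).constMap c₁) ((UProd U M).constMap c₂)
      (fun j => (M j).constMap c₁) (fun j => (M j).constMap c₂) rfl rfl).2
      (Filter.mem_of_superset Filter.univ_mem fun j _ => (hM j).boundAx c₁ c₂)
  · intro s a b
    rw [UProd.locRel_iff U M _ a b a.out b.out (Quotient.out_eq a) (Quotient.out_eq b)]
    constructor
    · intro h
      have h' : {j | a.out j = b.out j} ∈ U :=
        Filter.mem_of_superset h fun j hj => ((hM j).dd0_eq _ _).1 hj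
      exact Quotient.out_equiv_out.1 h'
    · rintro rfl
      exact Filter.mem_of_superset Filter.univ_mem fun j _ => ((hM j).dd0_eq _ _).2 rfl

theorem UProd.not_realizedIn {T : Set (PosSentence L)} (hM : ∀ j, LocalModel (M j) T) :
    ∀ φ ∈ T, ¬ φ.RealizedIn (UProd U M) := by
  intro φ hφ h
  have hmem := UProd.los_pos U M φ (fun e => e.elim) (fun e => e.elim) (fun e => e.elim) h
  obtain ⟨j, hj⟩ := Ultrafilter.nonempty_of_mem hmem
  refine (hM j).2 φ hφ ?_
  have e : (fun a : Empty => (fun e : Empty => e.elim : ∀ e : Empty, ∀ j, (M j).Dom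
      (emptySorts L e)) a j) = fun e : Empty => e.elim := funext fun e => e.elim
  show φ.Realize (M j) fun e => e.elim
  rw [← e]
  exact hj

end Ultraproduct

end Statement5Aux


/-! ### Local components -/

section Component

variable {L : LocalLanguage} (M : LStructure L) {α : Type} {σ : α → L.Sorts}
  (v : ∀ a, M.Dom (σ a))

/-- Membership in the local component of the tuple `v` (and the constants). -/
def inComp (s : L.Sorts) (y : M.Dom s) : Prop :=
  ∃ (t : LTerm L α σ s) (d : L.Loc s), M.locRel d y (t.realize M v)

/-- The local component of `v` as a substructure. -/
def locComp (hP : PreLocal M) : Substruct M where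
  carrier s := {y | inComp M v s y}
  const_mem c := ⟨.const c, L.dd0 _, (hP.dd0_eq _ _).2 rfl⟩

theorem inComp_v (hP : PreLocal M) (a : α) : inComp M v (σ a) (v a) :=
  ⟨.var a, L.dd0 _, (hP.dd0_eq _ _).2 rfl⟩

theorem inComp_closure (hP : PreLocal M) {s : L.Sorts} {x y : M.Dom s} (hy : inComp M v s y)
    {d : L.Loc s} (hxy : M.locRel d x y) : inComp M v s x := by
  obtain ⟨t, d', h⟩ := hy
  exact ⟨t, L.locMul d d', hP.comp d d' _ _ _ hxy h⟩

theorem LTerm.realize_cast {β : Type} {τ : β → L.Sorts} (N : LStructure L)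
    (w : ∀ b, N.Dom (τ b)) {s s' : L.Sorts} (e : s = s') (t : LTerm L β τ s) :
    (e ▸ t).realize N w = e ▸ (t.realize N w) := by
  subst e; rfl

theorem realize_rel_pair {β : Type} {τ : β → L.Sorts} (N : LStructure L) {s : L.Sorts}
    (d : L.Loc s) (t₁ t₂ : LTerm L β τ s) (w : ∀ b, N.Dom (τ b)) :
    (LPosForm.rel (L.locToRel d) (tpair t₁ t₂)).Realize N w ↔
      N.locRel d (t₁.realize N w) (t₂.realize N w) := by
  have e : (fun i => ((tpair t₁ t₂) i).realize N w)
      = dpair (C := fun i => N.Dom (![s, s] i)) (t₁.realize N w) (t₂.realize N w) := by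
    funext i
    rcases i with ⟨(_ | (_ | n)), h⟩
    · rfl
    · rfl
    · omega
  show N.relMap _ _ ↔ _
  rw [e]
  exact Iff.rfl

theorem rel_var_var (B : VBound L α σ) (hB : ∀ ψ ∈ B.toSet, ψ.Realize M v)
    (a b : α) (e : σ b = σ a) : ∃ d, M.locRel d (v a) (e ▸ v b) := by
  have hmem : LPosForm.rel (L.locToRel (B.dPair a b e.symm))
      (tpair (LTerm.var a) (e.symm.symm ▸ LTerm.var b)) ∈ B.toSet :=
    Or.inr ⟨a, b, e.symm, rfl⟩
  have h := (realize_rel_pair M _ _ _ v).1 (hB _ hmem)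
  rw [LTerm.realize_cast] at h
  exact ⟨_, h⟩

theorem rel_var_const (hP : PreLocal M) (B : VBound L α σ)
    (hB : ∀ ψ ∈ B.toSet, ψ.Realize M v) (a : α) (c : L.Const (σ a)) :
    ∃ d, M.locRel d (v a) (M.constMap c) := by
  have hne : Nonempty (L.Const (σ a)) := ⟨c⟩
  have hmem : LPosForm.rel (L.locToRel (B.dConst a hne))
      (tpair (LTerm.var a) (LTerm.const (B.cConst a hne))) ∈ B.toSet :=
    Or.inl ⟨a, hne, rfl⟩
  have h1 := (realize_rel_pair M _ _ _ v).1 (hB _ hmem)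
  exact ⟨_, hP.comp _ _ _ _ _ h1 (hP.boundAx (B.cConst a hne) c)⟩

theorem term_decomp : ∀ {s : L.Sorts} (t : LTerm L α σ s),
    (∃ (a : α) (e : σ a = s), t = e ▸ LTerm.var a) ∨ ∃ c : L.Const s, t = LTerm.const c := by
  intro s t
  cases t with
  | var a => exact Or.inl ⟨a, rfl, rfl⟩
  | const c => exact Or.inr ⟨c, rfl⟩

theorem term_term_rel (hP : PreLocal M) (B : VBound L α σ)
    (hB : ∀ ψ ∈ B.toSet, ψ.Realize M v) :
    ∀ {s : L.Sorts} (t₀ t₁ : LTerm L α σ s),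
      ∃ d, M.locRel d (t₀.realize M v) (t₁.realize M v) := by
  intro s t₀ t₁
  rcases term_decomp t₀ with ⟨a, e, rfl⟩ | ⟨c, rfl⟩
  · subst e
    rcases term_decomp t₁ with ⟨b, e', rfl⟩ | ⟨c, rfl⟩
    · rw [LTerm.realize_cast M v e' (LTerm.var b)]
      exact rel_var_var M v B hB a b e'
    · exact rel_var_const M v hP B hB a c
  · rcases term_decomp t₁ with ⟨b, e', rfl⟩ | ⟨c', rfl⟩
    · subst e'
      obtain ⟨d, h⟩ := rel_var_const M v hP B hB b c
      exact ⟨d, hP.symm _ _ _ h⟩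
    · exact ⟨L.bound c c', hP.boundAx c c'⟩

theorem Substruct.locRel_iff (A : Substruct M) {s : L.Sorts} (d : L.Loc s)
    (x y : A.toStruct.Dom s) : A.toStruct.locRel d x y ↔ M.locRel d x.1 y.1 := by
  have e : (fun i => (dpair (C := fun i => A.toStruct.Dom (![s, s] i)) x y i).1)
      = dpair (C := fun i => M.Dom (![s, s] i)) x.1 y.1 := by
    funext i
    rcases i with ⟨(_ | (_ | n)), h⟩
    · rfl
    · rfl
    · omega
  show M.relMap _ (fun i => (dpair (C := fun i => A.toStruct.Dom (![s, s] i)) x y i).1)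
    ↔ M.relMap _ _
  rw [e]

theorem LTerm.realize_sub (A : Substruct M) {β : Type} {τ : β → L.Sorts} {s : L.Sorts}
    (t : LTerm L β τ s) (w : ∀ b, A.toStruct.Dom (τ b)) :
    (t.realize A.toStruct w).1 = t.realize M fun b => (w b).1 := by
  cases t <;> rfl

theorem locComp_isLocal (hP : PreLocal M) (B : VBound L α σ)
    (hB : ∀ ψ ∈ B.toSet, ψ.Realize M v) : IsLocal (locComp M v hP).toStruct := by
  constructor
  · intro s d a b h
    exact (Substruct.locRel_iff M _ d b a).2
      (hP.symm d _ _ ((Substruct.locRel_iff M _ d a b).1 h))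
  · intro s d₁ d₂ hle a b h
    exact (Substruct.locRel_iff M _ d₂ a b).2
      (hP.mono d₁ d₂ hle _ _ ((Substruct.locRel_iff M _ d₁ a b).1 h))
  · intro s d₁ d₂ a b c h₁ h₂
    exact (Substruct.locRel_iff M _ _ a c).2
      (hP.comp d₁ d₂ _ _ _ ((Substruct.locRel_iff M _ d₁ a b).1 h₁)
        ((Substruct.locRel_iff M _ d₂ b c).1 h₂))
  · intro s c₁ c₂
    exact (Substruct.locRel_iff M _ _ _ _).2 (hP.boundAx c₁ c₂)
  · intro s a b
    obtain ⟨t₀, d₀, h₀⟩ := a.2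
    obtain ⟨t₁, d₁, h₁⟩ := b.2
    obtain ⟨d', h'⟩ := term_term_rel M v hP B hB t₀ t₁
    refine ⟨L.locMul d₀ (L.locMul d' d₁), (Substruct.locRel_iff M _ _ a b).2 ?_⟩
    exact hP.comp _ _ _ _ _ h₀ (hP.comp _ _ _ _ _ h' (hP.symm _ _ _ h₁))
  · intro s a b
    rw [Substruct.locRel_iff M _ _ a b, hP.dd0_eq]
    exact Subtype.ext_iff.symm

theorem pos_realize_sub (A : Substruct M) :
    ∀ {β : Type} {τ : β → L.Sorts} (φ : PosForm L β τ) (w : ∀ b, A.toStruct.Dom (τ b)),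
      φ.Realize A.toStruct w → φ.Realize M fun b => (w b).1 := by
  intro β τ φ
  induction φ with
  | rel R ts =>
    intro w h
    have e : (fun i => ((ts i).realize A.toStruct w).1)
        = fun i => (ts i).realize M fun b => (w b).1 :=
      funext fun i => LTerm.realize_sub M A (ts i) w
    show M.relMap R _
    rw [← e]
    exact h
  | and φ ψ ihφ ihψ => exact fun w h => ⟨ihφ w h.1, ihψ w h.2⟩
  | or φ ψ ihφ ihψ =>
    rintro w (h | h)
    exacts [Or.inl (ihφ w h), Or.inr (ihψ w h)]
  | @ex β τ s φ ih =>
    rintro w ⟨x, hx⟩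
    refine ⟨x.1, ?_⟩
    have hreal := ih (vcons x w) hx
    have e : (fun o => (vcons x w o).1) = vcons x.1 fun b => (w b).1 :=
      funext fun o => by cases o <;> rfl
    rw [← e]
    exact hreal

theorem lpos_realize_locComp (hP : PreLocal M) :
    ∀ {β : Type} {τ : β → L.Sorts} (φ : LPosForm L β τ) (w : ∀ b, M.Dom (τ b))
      (hw : ∀ b, inComp M v (τ b) (w b)),
      φ.Realize M w → φ.Realize (locComp M v hP).toStruct fun b => ⟨w b, hw b⟩ := by
  intro β τ φ
  induction φ with
  | rel R ts =>
    intro w hw h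
    show M.relMap R _
    have e : (fun i => ((ts i).realize (locComp M v hP).toStruct fun b => ⟨w b, hw b⟩).1)
        = fun i => (ts i).realize M w := by
      funext i
      exact LTerm.realize_sub M (locComp M v hP) (ts i) _
    rw [e]
    exact h
  | and φ ψ ihφ ihψ => exact fun w hw h => ⟨ihφ w hw h.1, ihψ w hw h.2⟩
  | or φ ψ ihφ ihψ =>
    rintro w hw (h | h)
    exacts [Or.inl (ihφ w hw h), Or.inr (ihψ w hw h)]
  | @lex β τ s d t φ ih =>
    rintro w hw ⟨x, hx1, hx2⟩
    have hbase : inComp M v s (t.realize M w) := by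
      cases t with
      | var b => exact hw b
      | const c => exact ⟨.const c, L.dd0 _, (hP.dd0_eq _ _).2 rfl⟩
    have hx : inComp M v s x := inComp_closure M v hP hbase hx1
    refine ⟨⟨x, hx⟩, ?_, ?_⟩
    · refine (Substruct.locRel_iff M (locComp M v hP) d _ _).2 ?_
      convert hx1 using 2
      exact LTerm.realize_sub M (locComp M v hP) t _
    · have hw' : ∀ o, inComp M v (osort s τ o) (vcons x w o) := fun o => by
        cases o with
        | none => exact hx
        | some b => exact hw b
      have hreal := ih (vcons x w) hw' hx2
      have e : (fun o => (⟨vcons x w o, hw' o⟩ : (locComp M v hP).toStruct.Dom (osort s τ o)))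
          = vcons (M := (locComp M v hP).toStruct) (σ := τ) (s := s) ⟨x, hx⟩
            (fun b => ⟨w b, hw b⟩) :=
        funext fun o => by cases o <;> rfl
      rw [← e]
      exact hreal

theorem locComp_localModel {T : Set (PosSentence L)} (hP : PreLocal M)
    (hTM : ∀ φ ∈ T, ¬ φ.RealizedIn M) (B : VBound L α σ)
    (hB : ∀ ψ ∈ B.toSet, ψ.Realize M v) : LocalModel (locComp M v hP).toStruct T := by
  refine ⟨locComp_isLocal M v hP B hB, fun φ hφ h => hTM φ hφ ?_⟩
  have hreal := pos_realize_sub M (locComp M v hP) φ (fun e => e.elim) h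
  have e : (fun b : Empty => ((fun e : Empty => e.elim :
        ∀ e : Empty, (locComp M v hP).toStruct.Dom (emptySorts L e)) b).1)
      = fun e : Empty => e.elim := funext fun e => e.elim
  show φ.Realize M fun e => e.elim
  rw [← e]
  exact hreal

end Component


/-! ### Smallness of the type of local positive formulas -/

section Small

variable {L : LocalLanguage}

/-- Iterated `Option` contexts. -/
def lctx (α : Type) : List L.Sorts → Type
  | [] => α
  | _ :: ℓ => Option (lctx α ℓ)

/-- Iterated sort assignments. -/
def lsort {α : Type} (σ : α → L.Sorts) : (ℓ : List L.Sorts) → lctx α ℓ → L.Sorts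
  | [] => σ
  | s :: ℓ => osort s (lsort σ ℓ)

/-- A small copy of the local positive formulas. -/
inductive SF (L : LocalLanguage) (α : Type) (σ : α → L.Sorts) : List L.Sorts → Type where
  | rel {ℓ : List L.Sorts} {n : ℕ} {ρ : Fin n → L.Sorts} (R : L.Rel n ρ)
      (ts : (i : Fin n) → LTerm L (lctx α ℓ) (lsort σ ℓ) (ρ i)) : SF L α σ ℓ
  | and {ℓ : List L.Sorts} (φ ψ : SF L α σ ℓ) : SF L α σ ℓ
  | or {ℓ : List L.Sorts} (φ ψ : SF L α σ ℓ) : SF L α σ ℓ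
  | lex {ℓ : List L.Sorts} (s : L.Sorts) (d : L.Loc s)
      (t : LTerm L (lctx α ℓ) (lsort σ ℓ) s) (φ : SF L α σ (s :: ℓ)) : SF L α σ ℓ

def SF.decode {α : Type} {σ : α → L.Sorts} :
    {ℓ : List L.Sorts} → SF L α σ ℓ → LPosForm L (lctx α ℓ) (lsort σ ℓ)
  | _, .rel R ts => .rel R ts
  | _, .and φ ψ => .and φ.decode ψ.decode
  | _, .or φ ψ => .or φ.decode ψ.decode
  | _, .lex s d t φ => .lex s d t φ.decode

theorem SF.decode_surj {α : Type} {σ : α → L.Sorts} :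
    ∀ {β : Type} {τ : β → L.Sorts} (φ : LPosForm L β τ) (ℓ : List L.Sorts)
      (hβ : β = lctx α ℓ), HEq τ (lsort σ ℓ) →
        ∃ c : SF L α σ ℓ, HEq c.decode φ := by
  intro β τ φ
  induction φ with
  | @rel β τ n ρ R ts =>
    intro ℓ hβ hτ
    subst hβ
    have hτ' := eq_of_heq hτ
    subst hτ'
    exact ⟨.rel R ts, HEq.rfl⟩
  | @and β τ φ ψ ihφ ihψ =>
    intro ℓ hβ hτ
    subst hβ
    have hτ' := eq_of_heq hτ
    subst hτ'
    obtain ⟨c₁, h₁⟩ := ihφ ℓ rfl HEq.rfl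
    obtain ⟨c₂, h₂⟩ := ihψ ℓ rfl HEq.rfl
    refine ⟨.and c₁ c₂, ?_⟩
    have e : SF.decode (.and c₁ c₂) = LPosForm.and c₁.decode c₂.decode := rfl
    rw [e, eq_of_heq h₁, eq_of_heq h₂]
  | @or β τ φ ψ ihφ ihψ =>
    intro ℓ hβ hτ
    subst hβ
    have hτ' := eq_of_heq hτ
    subst hτ'
    obtain ⟨c₁, h₁⟩ := ihφ ℓ rfl HEq.rfl
    obtain ⟨c₂, h₂⟩ := ihψ ℓ rfl HEq.rfl
    refine ⟨.or c₁ c₂, ?_⟩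
    have e : SF.decode (.or c₁ c₂) = LPosForm.or c₁.decode c₂.decode := rfl
    rw [e, eq_of_heq h₁, eq_of_heq h₂]
  | @lex β τ s d t φ ih =>
    intro ℓ hβ hτ
    subst hβ
    have hτ' := eq_of_heq hτ
    subst hτ'
    obtain ⟨c, h⟩ := ih (s :: ℓ) rfl HEq.rfl
    refine ⟨.lex s d t c, ?_⟩
    have e : SF.decode (.lex s d t c) = LPosForm.lex s d t c.decode := rfl
    rw [e, eq_of_heq h]

theorem small_lpos (α : Type) (σ : α → L.Sorts) : Small.{0} (LPosForm L α σ) := by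
  refine small_of_surjective (f := fun c : SF L α σ [] => SF.decode c) ?_
  intro φ
  obtain ⟨c, hc⟩ := SF.decode_surj φ [] rfl HEq.rfl
  exact ⟨c, eq_of_heq hc⟩

end Small

/-! ### The key compactness lemma -/

section KeyLemma

variable {L : LocalLanguage}

/-- Bounded compactness: a finitely locally satisfiable set of local positive formulas
containing a bound is realized in a local model of `T`. -/
theorem partial_of_finsat (T : Set (PosSentence L)) {α : Type} {σ : α → L.Sorts}
    (B : VBound L α σ) (Δ : Set (LPosForm L α σ)) (hBΔ : B.toSet ⊆ Δ)
    (hfin : FinLocSat T Δ) : IsPartialLType T Δ := by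
  haveI : Small.{0} (LPosForm L α σ) := small_lpos α σ
  set e := equivShrink (LPosForm L α σ) with he
  set ι := {S : Set (Shrink (LPosForm L α σ)) // S ⊆ e '' Δ ∧ S.Finite} with hι
  have hfac : ∀ i : ι, ∃ (N : LStructure L) (w : ∀ a, N.Dom (σ a)),
      LocalModel N T ∧ ∀ φ ∈ Δ, e φ ∈ i.1 → φ.Realize N w := by
    intro i
    have hsub : e ⁻¹' i.1 ⊆ Δ := by
      intro φ hφ
      obtain ⟨ψ, hψΔ, hψ⟩ := i.2.1 hφ
      rwa [← e.injective hψ]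
    obtain ⟨N, w, hN, hw⟩ := hfin _ hsub (i.2.2.preimage e.injective.injOn)
    exact ⟨N, w, hN, fun φ _ hmem => hw φ hmem⟩
  choose N w hN hw using hfac
  have hcond : ∀ t : Finset (Set ι),
      (↑t : Set (Set ι)) ⊆ {S : Set ι | ∃ φ ∈ Δ, S = {i : ι | e φ ∈ i.1}} →
        (⋂₀ (↑t : Set (Set ι))).Nonempty := by
    intro t ht
    set T₀ : Set (Shrink (LPosForm L α σ)) := {x | x ∈ e '' Δ ∧ {i : ι | x ∈ i.1} ∈ t}
      with hT₀
    have hT₀sub : T₀ ⊆ e '' Δ := fun x hx => hx.1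
    have hT₀fin : T₀.Finite := by
      have himg : ((fun x => {i : ι | x ∈ i.1}) '' T₀).Finite :=
        t.finite_toSet.subset (by rintro _ ⟨x, hx, rfl⟩; exact hx.2)
      refine Set.Finite.of_finite_image himg ?_
      intro x hx y hy hxy
      have hel : (⟨{x}, Set.singleton_subset_iff.2 hx.1, Set.finite_singleton x⟩ : ι)
          ∈ {i : ι | x ∈ i.1} := Set.mem_singleton x
      have hxy' : {i : ι | x ∈ i.1} = {i : ι | y ∈ i.1} := hxy
      have hel2 := (Set.ext_iff.1 hxy' _).1 hel
      exact (Set.mem_singleton_iff.1 hel2).symm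
    refine ⟨⟨T₀, hT₀sub, hT₀fin⟩, Set.mem_sInter.2 ?_⟩
    intro S hS
    obtain ⟨φ, hφΔ, rfl⟩ := ht hS
    show e φ ∈ T₀
    exact ⟨⟨φ, hφΔ, rfl⟩, hS⟩
  obtain ⟨U, hU⟩ := Ultrafilter.exists_ultrafilter_of_finite_inter_nonempty
    {S : Set ι | ∃ φ ∈ Δ, S = {i : ι | e φ ∈ i.1}} hcond
  have hUmem : ∀ φ ∈ Δ, {i : ι | e φ ∈ i.1} ∈ U := fun φ hφ => hU ⟨φ, hφ, rfl⟩
  have hPpre : PreLocal (UProd U N) := UProd.preLocal U N fun i => (hN i).1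
  set vP : ∀ a, (UProd U N).Dom (σ a) :=
    (fun a => Quotient.mk (uSetoid U N (σ a)) fun i => w i a) with hvP
  have hreal : ∀ φ ∈ Δ, φ.Realize (UProd U N) vP := by
    intro φ hφ
    refine UProd.los_lpos U N φ vP (fun a i => w i a) (fun a => rfl) ?_
    exact Filter.mem_of_superset (hUmem φ hφ) fun i hi => hw i φ hφ hi
  have hPneg : ∀ φ ∈ T, ¬ φ.RealizedIn (UProd U N) := UProd.not_realizedIn U N hN
  have hBv : ∀ ψ ∈ B.toSet, ψ.Realize (UProd U N) vP :=
    fun ψ h => hreal ψ (hBΔ h)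
  refine ⟨(locComp (UProd U N) vP hPpre).toStruct,
    fun a => ⟨vP a, inComp_v (UProd U N) vP hPpre a⟩,
    locComp_localModel (UProd U N) vP hPpre hPneg B hBv, ?_⟩
  intro φ hφ
  exact lpos_realize_locComp (UProd U N) vP hPpre φ vP
    (fun a => inComp_v (UProd U N) vP hPpre a) (hreal φ hφ)

end KeyLemma


/-! ### Extension to maximal types, and the main theorem -/

section Extension

variable {L : LocalLanguage}

theorem exists_ltype_ext (T : Set (PosSentence L)) {α : Type} {σ : α → L.Sorts}
    (B : VBound L α σ) (Γ : Set (LPosForm L α σ)) (hBΓ : B.toSet ⊆ Γ)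
    (hΓ : IsPartialLType T Γ) : ∃ p, IsLType T p ∧ Γ ⊆ p := by
  have hzorn : ∀ c ⊆ {Γ' | IsPartialLType T Γ' ∧ Γ ⊆ Γ'}, IsChain (· ⊆ ·) c → c.Nonempty →
      ∃ ub ∈ {Γ' | IsPartialLType T Γ' ∧ Γ ⊆ Γ'}, ∀ s ∈ c, s ⊆ ub := by
    rintro c hc hchain ⟨Γ₀, hΓ₀⟩
    have hΓsub : Γ ⊆ ⋃₀ c := (hc hΓ₀).2.trans (Set.subset_sUnion_of_mem hΓ₀)
    refine ⟨⋃₀ c, ⟨?_, hΓsub⟩, fun s hs => Set.subset_sUnion_of_mem hs⟩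
    refine partial_of_finsat T B _ (hBΓ.trans hΓsub) ?_
    intro Δ₀ hΔ₀ hΔfin
    have key : ∀ S : Set (LPosForm L α σ), S.Finite → S ⊆ ⋃₀ c → ∃ m ∈ c, S ⊆ m := by
      intro S hSfin
      refine Set.Finite.induction_on (motive := fun S _ => S ⊆ ⋃₀ c → ∃ m ∈ c, S ⊆ m) S hSfin ?_ ?_
      · exact fun _ => ⟨Γ₀, hΓ₀, Set.empty_subset _⟩
      · rintro a S' _ _ ih hsub
        obtain ⟨m₁, hm₁c, hm₁⟩ := ih fun x hx => hsub (Set.mem_insert_of_mem a hx)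
        obtain ⟨m₂, hm₂c, ham₂⟩ := hsub (Set.mem_insert a S')
        rcases hchain.total hm₁c hm₂c with h | h
        · exact ⟨m₂, hm₂c, Set.insert_subset_iff.2 ⟨ham₂, hm₁.trans h⟩⟩
        · exact ⟨m₁, hm₁c, Set.insert_subset_iff.2 ⟨h ham₂, hm₁⟩⟩
    obtain ⟨m, hmc, hΔm⟩ := key Δ₀ hΔfin hΔ₀
    obtain ⟨Mm, vm, hMm, hvm⟩ := (hc hmc).1
    exact ⟨Mm, vm, hMm, fun φ hφ => hvm φ (hΔm hφ)⟩
  obtain ⟨m, hΓm, hm⟩ :=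
    zorn_subset_nonempty {Γ' | IsPartialLType T Γ' ∧ Γ ⊆ Γ'} hzorn Γ ⟨hΓ, subset_rfl⟩
  refine ⟨m, ⟨hm.1.1, ?_⟩, hm.1.2⟩
  intro Γ'' hΓ'' hsub
  exact Set.Subset.antisymm (hm.2 ⟨hΓ'', hm.1.2.trans hsub⟩ hsub) hsub

end Extension


/-- For every bound `B(x)` of a variable `x` in `T`, the set
`⟨B(x)⟩ = {p ∈ S^x(T) : B(x) ⊆ p}` is compact in the local positive logic topology on
the space of local positive types. -/
theorem bound_is_compact_in_type_space
    {L : LocalLanguage} (T : Set (PosSentence L))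
    (hT : IsNegLocalTheory T) (hsat : LocSat T)
    (α : Type) (σ : α → L.Sorts) (B : VBound L α σ) :
    IsCompact {p : LTypeSpace L T α σ | B.toSet ⊆ p.1} := by
  rw [isCompact_iff_ultrafilter_le_nhds]
  intro F hF
  have hK : {p : LTypeSpace L T α σ | B.toSet ⊆ p.1} ∈ F := Filter.le_principal_iff.mp hF
  set Δ : Set (LPosForm L α σ) :=
    B.toSet ∪ {φ | {q : LTypeSpace L T α σ | φ ∈ q.1} ∈ F} with hΔdef
  have hmemF : ∀ φ ∈ Δ, {q : LTypeSpace L T α σ | φ ∈ q.1} ∈ F := by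
    rintro φ (hφ | hφ)
    · exact Filter.mem_of_superset hK fun q hq => hq hφ
    · exact hφ
  have hfin : FinLocSat T Δ := by
    intro Δ₀ hΔ₀ hΔfin
    have hint : (⋂ φ ∈ Δ₀, {q : LTypeSpace L T α σ | φ ∈ q.1}) ∈ F :=
      (Filter.biInter_mem hΔfin).2 fun φ hφ => hmemF φ (hΔ₀ hφ)
    obtain ⟨q, hq⟩ := Ultrafilter.nonempty_of_mem hint
    simp only [Set.mem_iInter] at hq
    obtain ⟨Mq, vq, hMq, hvq⟩ := q.2.1
    exact ⟨Mq, vq, hMq, fun φ hφ => hvq φ (hq φ hφ)⟩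
  have hpart := partial_of_finsat T B Δ Set.subset_union_left hfin
  obtain ⟨p, hp, hΔp⟩ := exists_ltype_ext T B Δ Set.subset_union_left hpart
  refine ⟨⟨p, hp⟩, fun ψ hψ => hΔp (Or.inl hψ), ?_⟩
  show (F : Filter (LTypeSpace L T α σ)) ≤
    @nhds _ (TopologicalSpace.generateFrom
      {U | ∃ φ : LPosForm L α σ, U = {q : LTypeSpace L T α σ | φ ∉ q.1}}) ⟨p, hp⟩
  refine le_of_le_of_eq ?_ TopologicalSpace.nhds_generateFrom.symm
  refine le_iInf₂ fun u hu => ?_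
  obtain ⟨hpu, φ, rfl⟩ := hu
  rw [Filter.le_principal_iff]
  have hnot : {q : LTypeSpace L T α σ | φ ∈ q.1} ∉ F := fun hmem => hpu (hΔp (Or.inr hmem))
  have hcompl := (Ultrafilter.compl_mem_iff_notMem).2 hnot
  have hceq : {q : LTypeSpace L T α σ | φ ∈ q.1}ᶜ = {q : LTypeSpace L T α σ | φ ∉ q.1} :=
    Set.compl_setOf _
  rw [hceq] at hcompl
  exact hcompl
end
end

section
/- Let T be a locally satisfiable negative local theory and C a retractor of T. Then every endomorphism of C (homomorphism from C to itself) is an automorphism. -/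
noncomputable section

theorem LHom.ext' {L : LocalLanguage} {M N : LStructure L} {f g : LHom M N}
    (h : f.toFun = g.toFun) : f = g := by
  cases f; cases g; cases h; rfl

theorem LHom.comp_assoc' {L : LocalLanguage} {M N P Q : LStructure L}
    (h : LHom P Q) (g : LHom N P) (f : LHom M N) :
    (h.comp g).comp f = h.comp (g.comp f) :=
  LHom.ext' rfl

theorem LHom.id_comp' {L : LocalLanguage} {M N : LStructure L} (f : LHom M N) :
    (LHom.id N).comp f = f := LHom.ext' rfl

theorem LHom.comp_id' {L : LocalLanguage} {M N : LStructure L} (f : LHom M N) :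
    f.comp (LHom.id M) = f := LHom.ext' rfl

/-- Every endomorphism of a retractor of `T` is an automorphism. -/
theorem endomorphism_of_retractor_is_automorphism
    {L : LocalLanguage} (T : Set (PosSentence L))
    (hT : IsNegLocalTheory T) (hsat : LocSat T)
    (C : LStructure L) (hC : IsRetractor T C)
    (f : LHom C C) :
    f.IsAuto := by
  obtain ⟨hCmod, hret⟩ := hC
  obtain ⟨g, hg⟩ := hret C hCmod f
  obtain ⟨h, hh⟩ := hret C hCmod g
  have hf : h = f := by
    calc h = h.comp (g.comp f) := by rw [hg, LHom.comp_id']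
    _ = (h.comp g).comp f := (LHom.comp_assoc' h g f).symm
    _ = f := by rw [hh, LHom.id_comp']
  exact ⟨g, hg, hf ▸ hh⟩
end
end
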